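/- Let (ξ_t)_{t≥1} be an i.i.d. sequence of real-valued random variables with natural filtration (𝓕_t), let L : ℝ → [0,∞) be measurable with E[L(ξ_1)] < ∞, let T be a stopping time with E[T] < ∞, and let c ≥ 0. If for every t ≥ 0 one has E[L(ξ_{t+1})·1{T = t+1} | 𝓕_t] ≥ c·P(T > t | 𝓕_t) almost surely, then E[L(ξ_T)] ≥ c·E[T]. -/

import Mathlib

open MeasureTheory ProbabilityTheory

/-- The natural filtration `𝓕_t = σ(ξ_1, …, ξ_t)` of a process indexed from `1`. -/
def natFiltration {Ω : Type*} [MeasurableSpace Ω] (X : ℕ → Ω → ℝ) (t : ℕ) :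
    MeasurableSpace Ω :=
  ⨆ s ∈ Set.Icc 1 t, MeasurableSpace.comap (X s) inferInstance

/-!
Write `T = ∑_{t ≥ 0} 1{t < T}` and `L(ξ_T) = ∑_{t ≥ 0} L(ξ_{t+1}) 1{T = t+1}` (using `T ≥ 1`).
Integrating the hypothesis over `Ω` turns it into `c P(T > t) ≤ E[L(ξ_{t+1}) 1{T = t+1}]`
for each `t`, and summing over `t` gives the claim. For the right-hand series to sum to
`E[L(ξ_T)]` it must be summable: since `{T > t} ∈ 𝓕_t` is independent of `ξ_{t+1}`, its terms
are at most `P(T > t) E[L(ξ_1)]`, a Wald-type bound whose sum is `E[T] E[L(ξ_1)] < ∞`.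
-/

theorem hasSum_indicator_lt_one {Ω : Type*} (T : Ω → ℕ) (ω : Ω) :
    HasSum (fun t => {ω | t < T ω}.indicator (fun _ => (1 : ℝ)) ω) (T ω) := by
  have h : ∑ t ∈ Finset.range (T ω), {ω | t < T ω}.indicator (fun _ => (1 : ℝ)) ω = T ω := by
    rw [Finset.sum_congr rfl fun t ht =>
      Set.indicator_of_mem (s := {ω | t < T ω}) (Finset.mem_range.1 ht) _]
    simp
  exact h ▸ hasSum_sum_of_ne_finset_zero fun t ht => Set.indicator_of_notMem (by simp_all) _

theorem hasSum_indicator_eq_succ {Ω : Type*} {T : Ω → ℕ} {ω : Ω} (hT : 1 ≤ T ω)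
    (X : ℕ → Ω → ℝ) :
    HasSum (fun t => {ω | T ω = t + 1}.indicator (X (t + 1)) ω) (X (T ω) ω) := by
  convert hasSum_single (f := fun t => {ω | T ω = t + 1}.indicator (X (t + 1)) ω) (T ω - 1)
    fun t ht => Set.indicator_of_notMem (by simp only [Set.mem_ofPred_eq]; omega) _
  simp [Nat.sub_add_cancel hT]

section SeriesOfIntegrals

variable {α : Type*} [MeasurableSpace α] {μ : Measure α}

theorem hasSum_integral_of_summable_of_nonneg {ι : Type*} [Countable ι] {f : ι → α → ℝ}
    {F : α → ℝ} (hf : ∀ i, Integrable (f i) μ) (hf0 : ∀ i, 0 ≤ f i)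
    (hsum : Summable fun i => ∫ a, f i a ∂μ) (hF : ∀ a, HasSum (f · a) (F a)) :
    HasSum (fun i => ∫ a, f i a ∂μ) (∫ a, F a ∂μ) := by
  have h := hasSum_integral_of_summable_integral_norm hf
    (by simpa only [Real.norm_of_nonneg (hf0 _ _)] using hsum)
  simpa only [(hF _).tsum_eq] using h

theorem hasSum_integral_of_nonneg {f : ℕ → α → ℝ} {F : α → ℝ} (hf : ∀ n, Integrable (f n) μ)
    (hf0 : ∀ n, 0 ≤ f n) (hF : ∀ a, HasSum (f · a) (F a)) (hFi : Integrable F μ) :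
    HasSum (fun n => ∫ a, f n a ∂μ) (∫ a, F a ∂μ) := by
  refine hasSum_integral_of_summable_of_nonneg hf hf0
    (summable_of_sum_range_le (c := ∫ a, F a ∂μ) (fun n => integral_nonneg (hf0 n)) fun N => ?_) hF
  rw [← integral_finsetSum _ fun n _ => hf n]
  exact integral_mono (integrable_finsetSum _ fun n _ => hf n) hFi
    fun a => sum_le_hasSum _ (fun n _ => hf0 n a) (hF a)

end SeriesOfIntegrals

section ConditionalExpectation

variable {Ω : Type*} {m mΩ : MeasurableSpace Ω} {μ : Measure Ω} [IsFiniteMeasure μ]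

theorem mul_integral_le_integral_of_ae_mul_condExp_le (hm : m ≤ mΩ) {c : ℝ} {f g : Ω → ℝ}
    (h : ∀ᵐ ω ∂μ, c * μ[f | m] ω ≤ μ[g | m] ω) : c * ∫ ω, f ω ∂μ ≤ ∫ ω, g ω ∂μ :=
  calc c * ∫ ω, f ω ∂μ = ∫ ω, c * μ[f | m] ω ∂μ := by
        rw [integral_const_mul, integral_condExp hm]
    _ ≤ ∫ ω, μ[g | m] ω ∂μ := integral_mono_ae (integrable_condExp.const_mul c) integrable_condExp h
    _ = ∫ ω, g ω ∂μ := integral_condExp hm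

theorem setIntegral_eq_measureReal_mul_integral_of_indep {m₁ : MeasurableSpace Ω}
    (hm₁ : m₁ ≤ mΩ) (hm : m ≤ mΩ) {f : Ω → ℝ} (hf : StronglyMeasurable[m₁] f)
    (hfi : Integrable f μ) (hind : Indep m₁ m μ) {s : Set Ω} (hs : MeasurableSet[m] s) :
    ∫ ω in s, f ω ∂μ = μ.real s * ∫ ω, f ω ∂μ := by
  rw [← setIntegral_condExp hm hfi hs, setIntegral_congr_ae (hm s hs)
    ((condExp_indep_eq hm₁ hm hf hind).mono fun _ h _ => h), setIntegral_const, smul_eq_mul]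

end ConditionalExpectation

theorem measurableSet_lt_of_measurableSet_eq {Ω : Type*} {m : ℕ → MeasurableSpace Ω}
    (hm : Monotone m) {T : Ω → ℕ} (hT : ∀ s, MeasurableSet[m s] {ω | T ω = s}) (t : ℕ) :
    MeasurableSet[m t] {ω | t < T ω} := by
  have h : {ω | t < T ω} = (⋃ s ∈ Set.Iic t, {ω | T ω = s})ᶜ := by
    ext ω
    simp only [Set.mem_ofPred_eq, Set.mem_compl_iff, Set.mem_iUnion, Set.mem_Iic, exists_prop,
      not_exists, not_and]
    exact ⟨fun h s hs hTs => by omega, fun h => not_le.1 fun h' => h _ h' rfl⟩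
  rw [h]
  exact (MeasurableSet.biUnion (Set.to_countable _) fun s hs => hm hs _ (hT s)).compl

section NaturalFiltration

variable {Ω : Type*} [mΩ : MeasurableSpace Ω] {ξ : ℕ → Ω → ℝ}

theorem natFiltration_mono : Monotone (natFiltration ξ) := fun _ t hst =>
  iSup₂_le fun u hu => le_iSup₂ (f := fun u (_ : u ∈ Set.Icc 1 t) =>
    MeasurableSpace.comap (ξ u) inferInstance) u ⟨hu.1, hu.2.trans hst⟩

theorem natFiltration_le (hmeas : ∀ t, 1 ≤ t → Measurable (ξ t)) (t : ℕ) :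
    natFiltration ξ t ≤ mΩ :=
  iSup₂_le fun s hs => (hmeas s hs.1).comap_le

theorem indep_comap_succ_natFiltration (hmeas : ∀ t, 1 ≤ t → Measurable (ξ t)) {P : Measure Ω}
    (hindep : iIndepFun (fun i : {n : ℕ // 1 ≤ n} => ξ i.1) P) (t : ℕ) :
    Indep (MeasurableSpace.comap (ξ (t + 1)) inferInstance) (natFiltration ξ t) P := by
  let m (i : {n : ℕ // 1 ≤ n}) : MeasurableSpace Ω := MeasurableSpace.comap (ξ i.1) inferInstance
  have h := indep_iSup_of_disjoint (m := m) (fun i => (hmeas i.1 i.2).comap_le) hindep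
    (S := {i | i.1 = t + 1}) (T := {i | i.1 ≤ t})
    (Set.disjoint_left.2 fun i (hi : i.1 = t + 1) (hi' : i.1 ≤ t) => by omega)
  refine indep_of_indep_of_le_right (indep_of_indep_of_le_left h ?_) ?_
  · exact le_iSup₂ (f := fun i (_ : i ∈ {i : {n : ℕ // 1 ≤ n} | i.1 = t + 1}) => m i)
      ⟨t + 1, t.succ_pos⟩ rfl
  · exact iSup₂_le fun s hs => le_iSup₂ (f := fun i (_ : i ∈ {i : {n : ℕ // 1 ≤ n} | i.1 ≤ t}) =>
      m i) ⟨s, hs.1⟩ hs.2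

end NaturalFiltration

theorem integral_indicator_eq_succ_le_measureReal_lt_mul {Ω : Type*} [MeasurableSpace Ω]
    {P : Measure Ω} [IsFiniteMeasure P] {ξ : ℕ → Ω → ℝ} (hmeas : ∀ t, 1 ≤ t → Measurable (ξ t))
    (hindep : iIndepFun (fun i : {n : ℕ // 1 ≤ n} => ξ i.1) P)
    (hident : ∀ t, 1 ≤ t → IdentDistrib (ξ t) (ξ 1) P P)
    {L : ℝ → ℝ} (hL : Measurable L) (hL0 : ∀ x, 0 ≤ L x)
    (hLint : Integrable (fun ω => L (ξ 1 ω)) P) {T : Ω → ℕ}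
    (hTstop : ∀ t, MeasurableSet[natFiltration ξ t] {ω | T ω = t}) (t : ℕ) :
    ∫ ω, {ω | T ω = t + 1}.indicator (fun ω => L (ξ (t + 1) ω)) ω ∂P
      ≤ P.real {ω | t < T ω} * ∫ ω, L (ξ 1 ω) ∂P := by
  have hLξ := (hident (t + 1) t.succ_pos).comp hL
  have hint : Integrable (fun ω => L (ξ (t + 1) ω)) P := hLξ.integrable_iff.2 hLint
  have hlt := measurableSet_lt_of_measurableSet_eq natFiltration_mono hTstop t
  calc ∫ ω, {ω | T ω = t + 1}.indicator (fun ω => L (ξ (t + 1) ω)) ω ∂P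
      ≤ ∫ ω, {ω | t < T ω}.indicator (fun ω => L (ξ (t + 1) ω)) ω ∂P := by
        refine integral_mono (hint.indicator (natFiltration_le hmeas _ _ (hTstop _)))
          (hint.indicator (natFiltration_le hmeas _ _ hlt)) fun ω => ?_
        exact Set.indicator_le_indicator_of_subset (fun ω (h : T ω = t + 1) => by simp [h])
          (fun _ => hL0 _) ω
    _ = P.real {ω | t < T ω} * ∫ ω, L (ξ (t + 1) ω) ∂P := by
        rw [integral_indicator (natFiltration_le hmeas _ _ hlt)]
        exact setIntegral_eq_measureReal_mul_integral_of_indep (hmeas _ t.succ_pos).comap_le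
          (natFiltration_le hmeas t) (hL.comp (comap_measurable _)).stronglyMeasurable hint
          (indep_comap_succ_natFiltration hmeas hindep t) hlt
    _ = P.real {ω | t < T ω} * ∫ ω, L (ξ 1 ω) ∂P := congrArg _ hLξ.integral_eq

theorem stmt_16_general
    {Ω : Type*} [MeasurableSpace Ω] (P : Measure Ω) [IsProbabilityMeasure P]
    (ξ : ℕ → Ω → ℝ)
    (hmeas : ∀ t, 1 ≤ t → Measurable (ξ t))
    (hindep : iIndepFun
      (fun i : {n : ℕ // 1 ≤ n} => ξ i.1) P)
    (hident : ∀ t, 1 ≤ t → IdentDistrib (ξ t) (ξ 1) P P)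
    (L : ℝ → ℝ) (hL : Measurable L) (hL0 : ∀ x, 0 ≤ L x)
    (hLint : Integrable (fun ω => L (ξ 1 ω)) P)
    (T : Ω → ℕ)
    (hT1 : ∀ ω, 1 ≤ T ω)
    (hTstop : ∀ t, MeasurableSet[natFiltration ξ t] {ω | T ω = t})
    (hTint : Integrable (fun ω => (T ω : ℝ)) P)
    (c : ℝ)
    (hbound : ∀ t : ℕ, ∀ᵐ ω ∂P,
      c * (P[Set.indicator {ω' | t < T ω'} (fun _ => (1 : ℝ)) | natFiltration ξ t]) ω
        ≤ (P[Set.indicator {ω' | T ω' = t + 1} (fun ω' => L (ξ (t + 1) ω'))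
            | natFiltration ξ t]) ω) :
    c * ∫ ω, (T ω : ℝ) ∂P ≤ ∫ ω, L (ξ (T ω) ω) ∂P := by
  have hlt t : MeasurableSet {ω | t < T ω} := natFiltration_le hmeas t _
    (measurableSet_lt_of_measurableSet_eq natFiltration_mono hTstop t)
  have hsurvival_eq t : ∫ ω, {ω | t < T ω}.indicator (fun _ => (1 : ℝ)) ω ∂P
      = P.real {ω | t < T ω} := by
    rw [integral_indicator_const _ (hlt t), smul_eq_mul, mul_one]
  have hsurvival : HasSum (fun t => P.real {ω | t < T ω}) (∫ ω, (T ω : ℝ) ∂P) := by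
    simp_rw [← hsurvival_eq]
    refine hasSum_integral_of_nonneg (fun t => (integrable_const (1 : ℝ)).indicator (hlt t))
      (fun t => Set.indicator_nonneg fun _ _ => zero_le_one) (fun ω => ?_) hTint
    exact hasSum_indicator_lt_one T ω
  have hstopped : HasSum
      (fun t => ∫ ω, {ω | T ω = t + 1}.indicator (fun ω => L (ξ (t + 1) ω)) ω ∂P)
      (∫ ω, L (ξ (T ω) ω) ∂P) := by
    have hLξ t : Integrable (fun ω => L (ξ (t + 1) ω)) P :=
      ((hident (t + 1) t.succ_pos).comp hL).integrable_iff.2 hLint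
    have hnonneg t : 0 ≤ {ω | T ω = t + 1}.indicator (fun ω => L (ξ (t + 1) ω)) :=
      Set.indicator_nonneg fun _ _ => hL0 _
    refine hasSum_integral_of_summable_of_nonneg
      (fun t => (hLξ t).indicator (natFiltration_le hmeas _ _ (hTstop _))) hnonneg
      (Summable.of_nonneg_of_le (fun t => integral_nonneg (hnonneg t))
        (integral_indicator_eq_succ_le_measureReal_lt_mul hmeas hindep hident hL hL0 hLint hTstop)
        (hsurvival.summable.mul_right _))
      fun ω => hasSum_indicator_eq_succ (hT1 ω) fun n ω => L (ξ n ω)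
  exact hasSum_le (fun t => hsurvival_eq t ▸
    mul_integral_le_integral_of_ae_mul_condExp_le (natFiltration_le hmeas t) (hbound t))
    (hsurvival.mul_left c) hstopped

/-- If `(ξ_t)_{t≥1}` is i.i.d., `L : ℝ → [0,∞)` is measurable with `E[L(ξ_1)] < ∞`, `T` is
a stopping time of the natural filtration with `E[T] < ∞`, `c ≥ 0`, and for every `t ≥ 0`
one has `E[L(ξ_{t+1})·1{T = t+1} | 𝓕_t] ≥ c·P(T > t | 𝓕_t)` a.s., then
`E[L(ξ_T)] ≥ c·E[T]`. -/
theorem stmt_16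
    {Ω : Type*} [MeasurableSpace Ω] (P : Measure Ω) [IsProbabilityMeasure P]
    (ξ : ℕ → Ω → ℝ)
    (hmeas : ∀ t, 1 ≤ t → Measurable (ξ t))
    (hindep : iIndepFun
      (fun i : {n : ℕ // 1 ≤ n} => ξ i.1) P)
    (hident : ∀ t, 1 ≤ t → IdentDistrib (ξ t) (ξ 1) P P)
    (L : ℝ → ℝ) (hL : Measurable L) (hL0 : ∀ x, 0 ≤ L x)
    (hLint : Integrable (fun ω => L (ξ 1 ω)) P)
    (T : Ω → ℕ)
    (hT1 : ∀ ω, 1 ≤ T ω)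
    (hTstop : ∀ t, MeasurableSet[natFiltration ξ t] {ω | T ω = t})
    (hTint : Integrable (fun ω => (T ω : ℝ)) P)
    (c : ℝ) (hc : 0 ≤ c)
    (hbound : ∀ t : ℕ, ∀ᵐ ω ∂P,
      c * (P[Set.indicator {ω' | t < T ω'} (fun _ => (1 : ℝ)) | natFiltration ξ t]) ω
        ≤ (P[Set.indicator {ω' | T ω' = t + 1} (fun ω' => L (ξ (t + 1) ω'))
            | natFiltration ξ t]) ω) :
    c * ∫ ω, (T ω : ℝ) ∂P ≤ ∫ ω, L (ξ (T ω) ω) ∂P :=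
  stmt_16_general P ξ hmeas hindep hident L hL hL0 hLint T hT1 hTstop hTint c hbound
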